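/- With G, κ, β, χ as above and h ▷ g := g⁻¹ h g · χ(h,g), the identity h₁ ▷ (χ(h₁,h₂)·h₂) = h₁ ▷ h₂ holds for all h₁, h₂ ∈ G, and more generally (h₁ ▷ h₂) ▷ h₃ = h₁ ▷ (h₂ h₃) for all h₁, h₂, h₃ ∈ G. -/

import Mathlib

/-! Since `κ` is a homomorphism to an abelian group that kills `χ`, it is invariant under
`▷` in the first argument: `κ (h ▷ g) = κ h`. So in `(h₁ ▷ h₂) ▷ h₃` the two twisting factors are
`β (κ h₁) (κ h₂)` and `β (κ h₁) (κ h₃)`, whose product is `χ(h₁, h₂ h₃)` by bi-additivity; since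
they are central they can be moved past the conjugation by `h₃`, and they drop out of
conjugations altogether, which also gives the first identity. -/

section Rack

variable {G A : Type*} [Group G] [AddCommGroup A]

theorem conj_central_mul {z : G} (hz : ∀ g, z * g = g * z) (g x : G) :
    (z * x)⁻¹ * g * (z * x) = x⁻¹ * g * x :=
  calc (z * x)⁻¹ * g * (z * x) = x⁻¹ * (z⁻¹ * (g * z)) * x := by group
    _ = x⁻¹ * g * x := by rw [← hz, inv_mul_cancel_left]

theorem conj_mul_central {z : G} (hz : ∀ g, z * g = g * z) (g x : G) :
    x⁻¹ * (g * z) * x = x⁻¹ * g * x * z :=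
  calc x⁻¹ * (g * z) * x = x⁻¹ * g * (z * x) := by group
    _ = x⁻¹ * g * x * z := by rw [hz, ← mul_assoc]

variable {κ : G → A} {β : A → A → G}

theorem map_inv_of_map_mul (hκ : ∀ g h : G, κ (g * h) = κ g + κ h) (g : G) :
    κ g⁻¹ = -κ g :=
  (MonoidHom.mk' (fun g => Multiplicative.ofAdd (κ g)) hκ).map_inv g

theorem map_conj_of_map_mul (hκ : ∀ g h : G, κ (g * h) = κ g + κ h) (g x : G) :
    κ (x⁻¹ * g * x) = κ g := by
  rw [hκ, hκ, map_inv_of_map_mul hκ]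
  abel

def rackOp (κ : G → A) (β : A → A → G) (h g : G) : G :=
  g⁻¹ * h * g * β (κ h) (κ g)

theorem map_rackOp (hκ : ∀ g h : G, κ (g * h) = κ g + κ h) (hker : ∀ a b : A, κ (β a b) = 0)
    (h g : G) : κ (rackOp κ β h g) = κ h := by
  rw [rackOp, hκ, hker, add_zero, map_conj_of_map_mul hκ]

theorem rackOp_central_mul (hκ : ∀ g h : G, κ (g * h) = κ g + κ h)
    (hcenter : ∀ a b : A, ∀ g : G, β a b * g = g * β a b) (hker : ∀ a b : A, κ (β a b) = 0)
    (h g : G) : rackOp κ β h (β (κ h) (κ g) * g) = rackOp κ β h g := by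
  have hκg : κ (β (κ h) (κ g) * g) = κ g := by rw [hκ, hker, zero_add]
  rw [rackOp, rackOp, hκg, conj_central_mul (hcenter _ _)]

theorem rackOp_rackOp (hκ : ∀ g h : G, κ (g * h) = κ g + κ h)
    (hcenter : ∀ a b : A, ∀ g : G, β a b * g = g * β a b)
    (hsymm : ∀ a b : A, β a b = β b a) (hadd : ∀ a a' b : A, β (a + a') b = β a b * β a' b)
    (hker : ∀ a b : A, κ (β a b) = 0) (h₁ h₂ h₃ : G) :
    rackOp κ β (rackOp κ β h₁ h₂) h₃ = rackOp κ β h₁ (h₂ * h₃) := by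
  have hadd_right : ∀ a b b' : A, β a (b + b') = β a b * β a b' := fun a b b' => by
    rw [hsymm, hadd, hsymm b, hsymm b']
  rw [rackOp, map_rackOp hκ hker, rackOp, rackOp, conj_mul_central (hcenter _ _), hκ,
    hadd_right, mul_inv_rev]
  group

end Rack

/-- For the rack operation `h ▷ g = g⁻¹ h g · χ(h,g)` one has
`h₁ ▷ (χ(h₁,h₂)·h₂) = h₁ ▷ h₂` and `(h₁ ▷ h₂) ▷ h₃ = h₁ ▷ (h₂ h₃)`. -/
theorem rack_absorption_identities {G A : Type*} [Group G] [AddCommGroup A]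
    (κ : G → A) (hκ : ∀ g h : G, κ (g * h) = κ g + κ h)
    (β : A → A → G)
    (hcenter : ∀ a b : A, ∀ g : G, β a b * g = g * β a b)
    (hsymm : ∀ a b : A, β a b = β b a)
    (hadd : ∀ a a' b : A, β (a + a') b = β a b * β a' b)
    (hker : ∀ a b : A, κ (β a b) = 0) :
    let χ : G → G → G := fun h g => β (κ h) (κ g)
    let op : G → G → G := fun h g => g⁻¹ * h * g * χ h g
    (∀ h₁ h₂ : G, op h₁ (χ h₁ h₂ * h₂) = op h₁ h₂) ∧
    (∀ h₁ h₂ h₃ : G, op (op h₁ h₂) h₃ = op h₁ (h₂ * h₃)) :=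
  ⟨rackOp_central_mul hκ hcenter hker, rackOp_rackOp hκ hcenter hsymm hadd hker⟩
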